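/- Let ρ0 > 0, N0, N1, N2 > 0, α > β > 0, and let f : (0, ρ0] → [0, ∞) satisfy f(ρ0) < N0 and f(r) ≤ N1 (r/ρ)^α f(ρ) + N2 ρ^β for all 0 < r < ρ ≤ ρ0. Then there exist positive constants N3 and N4 depending only on N0, N1, N2, α, β such that f(r) ≤ N3 (r/ρ0)^β f(ρ0) + N4 r^β for every r ∈ (0, ρ0]. -/

import Mathlib

open MeasureTheory Metric Real NNReal

noncomputable section

/-- Five dimensional Euclidean space. -/
abbrev E5 := EuclideanSpace ℝ (Fin 5)

/-- Standard basis vector. -/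
def eb (i : Fin 5) : E5 := EuclideanSpace.single i 1

/-- Euclidean inner product on `E5`. -/
def inner5 (a b : E5) : ℝ := ∑ i : Fin 5, a i * b i

/-- `|∇u|²`, the squared (Frobenius) norm of the gradient of a vector field. -/
def gradNormSq (u : E5 → E5) (x : E5) : ℝ :=
  ∑ i : Fin 5, ‖fderiv ℝ u x (eb i)‖ ^ 2

/-- Divergence of a vector field. -/
def divg (u : E5 → E5) (x : E5) : ℝ :=
  ∑ i : Fin 5, fderiv ℝ u x (eb i) i

/-- Laplacian of a scalar function. -/
def lap (ψ : E5 → ℝ) (x : E5) : ℝ :=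
  ∑ i : Fin 5, fderiv ℝ (fun y => fderiv ℝ ψ y (eb i)) x (eb i)

/-- The unit ball `B_1 ⊆ ℝ⁵`. -/
def B1 : Set E5 := ball 0 1

/-- The open upper half space `{x₅ > 0}`. -/
def upperHalf : Set E5 := {x : E5 | 0 < x 4}

/-- The unit upper half ball `B_1⁺`. -/
def B1p : Set E5 := B1 ∩ upperHalf

/-- The upper half ball `B⁺(x₀, r)`. -/
def Bp (x0 : E5) (r : ℝ) : Set E5 := ball x0 r ∩ upperHalf

/-- Average of a function over a set (w.r.t. Lebesgue measure). -/
def avgOn (s : Set E5) (g : E5 → ℝ) : ℝ := ⨍ x in s, g x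

/-- `(u, p)` is a suitable weak solution of the 5D stationary Navier-Stokes equations
`u·∇u − Δu + ∇p = f`, `div u = 0` in the unit ball `B_1`. -/
structure IsSWS (u : E5 → E5) (p : E5 → ℝ) (f : E5 → E5) : Prop where
  u_diff : ∀ x ∈ B1, DifferentiableAt ℝ u x
  u_L2 : IntegrableOn (fun x => ‖u x‖ ^ 2) B1
  grad_L2 : IntegrableOn (gradNormSq u) B1
  p_L1 : IntegrableOn p B1
  div_free : ∀ x ∈ B1, divg u x = 0
  pde : ∀ φ : E5 → E5, ContDiff ℝ (⊤ : ℕ∞) φ → HasCompactSupport φ → tsupport φ ⊆ B1 →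
    ∫ x in B1, (inner5 (fderiv ℝ u x (u x)) (φ x)
      + ∑ i : Fin 5, inner5 (fderiv ℝ u x (eb i)) (fderiv ℝ φ x (eb i))
      - p x * divg φ x - inner5 (f x) (φ x)) = 0
  energy : ∀ ψ : E5 → ℝ, ContDiff ℝ (⊤ : ℕ∞) ψ → (∀ x, 0 ≤ ψ x) →
    HasCompactSupport ψ → tsupport ψ ⊆ B1 →
    2 * ∫ x in B1, gradNormSq u x * ψ x ≤
      ∫ x in B1, (‖u x‖ ^ 2 * lap ψ x
        + (‖u x‖ ^ 2 + 2 * p x) * inner5 (u x) (gradient ψ x)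
        + 2 * inner5 (f x) (u x) * ψ x)

/-- `(u, p)` is a suitable weak solution of the 5D stationary Navier-Stokes equations in the
unit upper half ball `B_1⁺`, with zero Dirichlet condition on the flat boundary portion
`B_1 ∩ {x₅ = 0}`.  Test functions for the local energy inequality may be nonzero on the flat
boundary but vanish near the curved boundary. -/
structure IsSWSHalf (u : E5 → E5) (p : E5 → ℝ) (f : E5 → E5) : Prop where
  u_diff : ∀ x ∈ B1p, DifferentiableAt ℝ u x
  u_L2 : IntegrableOn (fun x => ‖u x‖ ^ 2) B1p
  grad_L2 : IntegrableOn (gradNormSq u) B1p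
  p_L1 : IntegrableOn p B1p
  bc : ∀ x : E5, ‖x‖ < 1 → x 4 = 0 → u x = 0
  div_free : ∀ x ∈ B1p, divg u x = 0
  pde : ∀ φ : E5 → E5, ContDiff ℝ (⊤ : ℕ∞) φ → HasCompactSupport φ → tsupport φ ⊆ B1p →
    ∫ x in B1p, (inner5 (fderiv ℝ u x (u x)) (φ x)
      + ∑ i : Fin 5, inner5 (fderiv ℝ u x (eb i)) (fderiv ℝ φ x (eb i))
      - p x * divg φ x - inner5 (f x) (φ x)) = 0
  energy : ∀ ψ : E5 → ℝ, ContDiff ℝ (⊤ : ℕ∞) ψ → (∀ x, 0 ≤ ψ x) →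
    HasCompactSupport ψ → tsupport ψ ⊆ B1 →
    2 * ∫ x in B1p, gradNormSq u x * ψ x ≤
      ∫ x in B1p, (‖u x‖ ^ 2 * lap ψ x
        + (‖u x‖ ^ 2 + 2 * p x) * inner5 (u x) (gradient ψ x)
        + 2 * inner5 (f x) (u x) * ψ x)

/-- `A(x₀,r) = r⁻³ ∫_{B(x₀,r)} |u|²`. -/
def qA (u : E5 → E5) (x0 : E5) (r : ℝ) : ℝ := (∫ x in ball x0 r, ‖u x‖ ^ 2) / r ^ 3

/-- `C(x₀,r) = r^{q−5} ∫_{B(x₀,r)} |u|^q`. -/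
def qC (u : E5 → E5) (q : ℝ) (x0 : E5) (r : ℝ) : ℝ :=
  (∫ x in ball x0 r, ‖u x‖ ^ q) / r ^ (5 - q)

/-- `E(x₀,r) = r⁻¹ ∫_{B(x₀,r)} |∇u|²`. -/
def qE (u : E5 → E5) (x0 : E5) (r : ℝ) : ℝ := (∫ x in ball x0 r, gradNormSq u x) / r

/-- `G(x₀,r) = r^{−(10−15c)/(4−c)} ∫_{B(x₀,r)} |p − (p)_{B(x₀,r)}|^{5(1+c)/(4−c)}`. -/
def qG (p : E5 → ℝ) (c : ℝ) (x0 : E5) (r : ℝ) : ℝ :=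
  (∫ x in ball x0 r, |p x - avgOn (ball x0 r) p| ^ (5 * (1 + c) / (4 - c))) /
    r ^ ((10 - 15 * c) / (4 - c))

/-- `P(x₀,r) = r⁻³ ∫_{B(x₀,r)} |p − (p)_{B(x₀,r)}|`. -/
def qP (p : E5 → ℝ) (x0 : E5) (r : ℝ) : ℝ :=
  (∫ x in ball x0 r, |p x - avgOn (ball x0 r) p|) / r ^ 3

/-- `F(x₀,r) = r ∫_{B(x₀,r)} |f|²`. -/
def qF (f : E5 → E5) (x0 : E5) (r : ℝ) : ℝ := r * ∫ x in ball x0 r, ‖f x‖ ^ 2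

/-- `A⁺(x₀,r)`. -/
def qAp (u : E5 → E5) (x0 : E5) (r : ℝ) : ℝ := (∫ x in Bp x0 r, ‖u x‖ ^ 2) / r ^ 3

/-- `C⁺(x₀,r)`. -/
def qCp (u : E5 → E5) (q : ℝ) (x0 : E5) (r : ℝ) : ℝ :=
  (∫ x in Bp x0 r, ‖u x‖ ^ q) / r ^ (5 - q)

/-- `E⁺(x₀,r)`. -/
def qEp (u : E5 → E5) (x0 : E5) (r : ℝ) : ℝ := (∫ x in Bp x0 r, gradNormSq u x) / r

/-- `G⁺(x₀,r)`. -/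
def qGp (p : E5 → ℝ) (c : ℝ) (x0 : E5) (r : ℝ) : ℝ :=
  (∫ x in Bp x0 r, |p x - avgOn (Bp x0 r) p| ^ (5 * (1 + c) / (4 - c))) /
    r ^ ((10 - 15 * c) / (4 - c))

/-- `P⁺(x₀,r)`. -/
def qPp (p : E5 → ℝ) (x0 : E5) (r : ℝ) : ℝ :=
  (∫ x in Bp x0 r, |p x - avgOn (Bp x0 r) p|) / r ^ 3

/-- `F⁺(x₀,r)`. -/
def qFp (f : E5 → E5) (x0 : E5) (r : ℝ) : ℝ := r * ∫ x in Bp x0 r, ‖f x‖ ^ 2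

/-- `u` agrees a.e. on `s` with a function that is Hölder continuous on `s`. -/
def HolderPiece (u : E5 → E5) (s : Set E5) : Prop :=
  ∃ (v : E5 → E5) (C α : ℝ≥0), 0 < α ∧ (α : ℝ) ≤ 1 ∧ HolderOnWith C α v s ∧
    (∀ᵐ x ∂(volume.restrict s), u x = v x)
set_option maxHeartbeats 1000000 in
/-- **Lemma 2.2 (iteration lemma).** If `f(ρ₀) < N₀` and
`f(r) ≤ N₁ (r/ρ)^α f(ρ) + N₂ ρ^β` for all `0 < r < ρ ≤ ρ₀` with `α > β > 0`, then
`f(r) ≤ N₃ (r/ρ₀)^β f(ρ₀) + N₄ r^β` for all `r ∈ (0, ρ₀]`, where `N₃, N₄` depend only on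
`N₀, N₁, N₂, α, β`. -/
theorem iteration_lemma (N0 N1 N2 α β : ℝ) (hN0 : 0 < N0) (hN1 : 0 < N1) (hN2 : 0 < N2)
    (hβ : 0 < β) (hαβ : β < α) :
    ∃ N3 > (0 : ℝ), ∃ N4 > (0 : ℝ), ∀ ρ0 : ℝ, 0 < ρ0 → ∀ f : ℝ → ℝ,
      (∀ r : ℝ, 0 < r → r ≤ ρ0 → 0 ≤ f r) →
      f ρ0 < N0 →
      (∀ r ρ : ℝ, 0 < r → r < ρ → ρ ≤ ρ0 → f r ≤ N1 * (r / ρ) ^ α * f ρ + N2 * ρ ^ β) →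
      ∀ r : ℝ, 0 < r → r ≤ ρ0 → f r ≤ N3 * (r / ρ0) ^ β * f ρ0 + N4 * r ^ β := by
  
  have hγ : 0 < α - β := sub_pos.mpr hαβ
  have h2N1 : (0:ℝ) < (2*N1)⁻¹ := by positivity
  set τ : ℝ := min ((2*N1)⁻¹ ^ (1/(α-β))) (1/2) with hτdef
  have hτpos : 0 < τ := lt_min (Real.rpow_pos_of_pos h2N1 _) (by norm_num)
  have hτle1 : τ ≤ 1 := le_trans (min_le_right _ _) (by norm_num)
  have hτlt1 : τ < 1 := lt_of_le_of_lt (min_le_right _ _) (by norm_num)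
  have hkey : N1 * τ ^ (α-β) ≤ 1/2 := by
    have h1 : τ ^ (α-β) ≤ ((2*N1)⁻¹ ^ (1/(α-β))) ^ (α-β) :=
      Real.rpow_le_rpow hτpos.le (min_le_left _ _) hγ.le
    have h2 : ((2*N1)⁻¹ ^ (1/(α-β))) ^ (α-β) = (2*N1)⁻¹ := by
      rw [← Real.rpow_mul h2N1.le, one_div, inv_mul_cancel₀ hγ.ne', Real.rpow_one]
    calc N1 * τ ^ (α-β) ≤ N1 * (2*N1)⁻¹ := by
          exact mul_le_mul_of_nonneg_left (h2 ▸ h1) hN1.le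
      _ = 1/2 := by field_simp
  set T : ℝ := τ ^ β with hTdef
  have hTpos : 0 < T := Real.rpow_pos_of_pos hτpos _
  have hTle1 : T ≤ 1 := Real.rpow_le_one hτpos.le hτle1 hβ.le
  clear_value τ
  have hτα : N1 * τ ^ α ≤ T/2 := by
    have : τ ^ α = τ ^ (α-β) * T := by
      rw [hTdef, ← Real.rpow_add hτpos]; ring_nf
    rw [this]
    calc N1 * (τ ^ (α-β) * T) = (N1 * τ ^ (α-β)) * T := by ring
      _ ≤ (1/2) * T := mul_le_mul_of_nonneg_right hkey hTpos.le
      _ = T/2 := by ring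
  clear_value T
  refine ⟨(N1+1)/T, by positivity, (N1+1)/T * (2/T + 1) * N2, by positivity, ?_⟩
  intro ρ0 hρ0 f hf hfN0 hiter r hr hrρ0
  set X : ℝ := f ρ0 + 2*N2*ρ0^β/T with hXdef
  clear_value X
  have hfρ0 : 0 ≤ f ρ0 := hf ρ0 hρ0 le_rfl
  have hρβ : 0 < ρ0 ^ β := Real.rpow_pos_of_pos hρ0 _
  have hXpos : 0 < X := by rw [hXdef]; positivity
  -- main induction
  have main : ∀ k : ℕ, f (τ^k * ρ0) ≤ (τ^k)^β * X := by
    intro k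
    induction k with
    | zero =>
      have h0 : (0:ℝ) ≤ 2*N2*ρ0^β/T := by positivity
      simp only [pow_zero, one_mul, Real.one_rpow, hXdef]
      linarith
    | succ k ih =>
      have hτk : (0:ℝ) < τ^k := pow_pos hτpos k
      have hτk1 : (0:ℝ) < τ^(k+1) := pow_pos hτpos _
      have hle : τ^k ≤ 1 := pow_le_one₀ hτpos.le hτle1
      have h1 : f (τ^(k+1) * ρ0) ≤ N1 * ((τ^(k+1)*ρ0) / (τ^k*ρ0)) ^ α * f (τ^k*ρ0)
          + N2 * (τ^k*ρ0) ^ β := by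
        apply hiter _ _ (by positivity) _ (by nlinarith)
        have : τ^(k+1) < τ^k := by
          rw [pow_succ]
          nlinarith
        nlinarith
      have hratio : (τ^(k+1)*ρ0) / (τ^k*ρ0) = τ := by
        rw [pow_succ]; field_simp
      rw [hratio] at h1
      have hmul : (τ^k*ρ0) ^ β = (τ^k)^β * ρ0^β :=
        Real.mul_rpow hτk.le hρ0.le
      have hmul1 : (τ^(k+1))^β = (τ^k)^β * T := by
        rw [pow_succ, Real.mul_rpow hτk.le hτpos.le, ← hTdef]
      have hτkβ : (0:ℝ) < (τ^k)^β := Real.rpow_pos_of_pos hτk _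
      have hfk : 0 ≤ f (τ^k*ρ0) := hf _ (by positivity) (by nlinarith)
      have h2 : N1 * τ ^ α * f (τ^k*ρ0) ≤ (T/2) * ((τ^k)^β * X) := by
        calc N1 * τ ^ α * f (τ^k*ρ0) ≤ (T/2) * f (τ^k*ρ0) :=
              mul_le_mul_of_nonneg_right hτα hfk
          _ ≤ (T/2) * ((τ^k)^β * X) := by
              apply mul_le_mul_of_nonneg_left ih (by positivity)
      have hXT : 2*N2*ρ0^β/T ≤ X := by rw [hXdef]; exact le_add_of_nonneg_left hfρ0
      rw [hmul1]
      calc f (τ^(k+1) * ρ0) ≤ (T/2) * ((τ^k)^β * X) + N2 * ((τ^k)^β * ρ0^β) := by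
            rw [hmul] at h1; linarith
        _ ≤ (τ^k)^β * T * X := by
            have h5 : 2*N2*ρ0^β ≤ X*T := (div_le_iff₀ hTpos).mp hXT
            have h6 : N2*ρ0^β ≤ X*T/2 := by linarith
            calc (T/2) * ((τ^k)^β * X) + N2 * ((τ^k)^β * ρ0^β)
                = (τ^k)^β * (T*X/2) + (τ^k)^β * (N2*ρ0^β) := by ring
              _ ≤ (τ^k)^β * (T*X/2) + (τ^k)^β * (X*T/2) :=
                  add_le_add_right (mul_le_mul_of_nonneg_left h6 hτkβ.le) _
              _ = (τ^k)^β * T * X := by ring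
  -- find k with τ^(k+1)*ρ0 < r ≤ τ^k*ρ0
  have hex : ∃ n : ℕ, τ^(n+1) * ρ0 < r := by
    obtain ⟨n, hn⟩ := exists_pow_lt_of_lt_one (div_pos hr hρ0) hτlt1
    refine ⟨n, ?_⟩
    have h1 : τ^(n+1) ≤ τ^n := pow_le_pow_of_le_one hτpos.le hτle1 (by omega)
    have h2 : τ^n * ρ0 < r := (lt_div_iff₀ hρ0).mp hn
    exact lt_of_le_of_lt (mul_le_mul_of_nonneg_right h1 hρ0.le) h2
  classical
  set k := Nat.find hex with hkdef
  have hk1 : τ^(k+1) * ρ0 < r := Nat.find_spec hex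
  have hk2 : r ≤ τ^k * ρ0 := by
    rcases Nat.eq_zero_or_pos k with h | h
    · rw [h]; simpa using hrρ0
    · have := Nat.find_min hex (m := k - 1) (by omega)
      push_neg at this
      have hkk : k - 1 + 1 = k := by omega
      rwa [hkk] at this
  clear_value k
  have hτk : (0:ℝ) < τ^k := pow_pos hτpos k
  have hτkβ : (0:ℝ) < (τ^k)^β := Real.rpow_pos_of_pos hτk _
  -- bound f r by (N1+1) * (τ^k)^β * (X + N2 ρ0^β)
  have hkρ : τ^k * ρ0 ≤ ρ0 := by
    calc τ^k * ρ0 ≤ 1 * ρ0 :=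
          mul_le_mul_of_nonneg_right (pow_le_one₀ hτpos.le hτle1) hρ0.le
      _ = ρ0 := one_mul _
  have hXle : X ≤ X + N2*ρ0^β := le_add_of_nonneg_right (by positivity)
  have hbd : f r ≤ (N1+1) * (τ^k)^β * (X + N2*ρ0^β) := by
    rcases eq_or_lt_of_le hk2 with heq | hlt
    · calc f r = f (τ^k * ρ0) := by rw [heq]
        _ ≤ (τ^k)^β * X := main k
        _ ≤ (τ^k)^β * (X + N2*ρ0^β) := mul_le_mul_of_nonneg_left hXle hτkβ.le
        _ = 1 * ((τ^k)^β * (X + N2*ρ0^β)) := (one_mul _).symm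
        _ ≤ (N1+1) * ((τ^k)^β * (X + N2*ρ0^β)) :=
            mul_le_mul_of_nonneg_right (by linarith) (by positivity)
        _ = (N1+1) * (τ^k)^β * (X + N2*ρ0^β) := by ring
    · have h1 := hiter r (τ^k * ρ0) hr hlt hkρ
      have hrat : (r / (τ^k * ρ0)) ^ α ≤ 1 :=
        Real.rpow_le_one (by positivity) (by rw [div_le_one (by positivity)]; exact hlt.le)
          (by linarith)
      have hfk : 0 ≤ f (τ^k*ρ0) := hf _ (by positivity) hkρ
      have hmul : (τ^k*ρ0) ^ β = (τ^k)^β * ρ0^β := Real.mul_rpow hτk.le hρ0.le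
      have h2 : N1 * (r / (τ^k * ρ0)) ^ α * f (τ^k*ρ0) ≤ N1 * ((τ^k)^β * X) := by
        have := main k
        have hrp : 0 ≤ (r / (τ^k * ρ0)) ^ α := by positivity
        calc N1 * (r / (τ^k * ρ0)) ^ α * f (τ^k*ρ0) ≤ N1 * 1 * f (τ^k*ρ0) := by
              apply mul_le_mul_of_nonneg_right _ hfk
              exact mul_le_mul_of_nonneg_left hrat hN1.le
          _ = N1 * f (τ^k*ρ0) := by ring
          _ ≤ N1 * ((τ^k)^β * X) := mul_le_mul_of_nonneg_left (main k) hN1.le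
      rw [hmul] at h1
      have h3 : f r ≤ N1 * ((τ^k)^β * X) + N2 * ((τ^k)^β * ρ0^β) := by linarith
      have e1 : (N1+1) * (τ^k)^β * (X + N2*ρ0^β)
          = N1 * ((τ^k)^β * X) + N2 * ((τ^k)^β * ρ0^β)
            + ((τ^k)^β * X + N1 * ((τ^k)^β * (N2*ρ0^β))) := by ring
      have p1 : 0 ≤ (τ^k)^β * X := by positivity
      have p2 : 0 ≤ N1 * ((τ^k)^β * (N2*ρ0^β)) := by positivity
      linarith
  -- convert (τ^k)^β into (r/ρ0)^β / T
  have hτcmp : (τ^k)^β ≤ (r/ρ0)^β / T := by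
    have h1 : τ^(k+1) ≤ r/ρ0 := by
      rw [le_div_iff₀ hρ0]; exact hk1.le
    have h2 : (τ^(k+1))^β ≤ (r/ρ0)^β :=
      Real.rpow_le_rpow (by positivity) h1 hβ.le
    have h3 : (τ^(k+1))^β = (τ^k)^β * T := by
      rw [pow_succ, Real.mul_rpow hτk.le hτpos.le, ← hTdef]
    rw [h3] at h2
    rw [le_div_iff₀ hTpos]; exact h2
  have hrβ : (r/ρ0)^β * ρ0^β = r^β := by
    rw [Real.div_rpow hr.le hρ0.le, div_mul_cancel₀]
    exact hρβ.ne'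
  have hrρβ : (0:ℝ) < (r/ρ0)^β := Real.rpow_pos_of_pos (by positivity) _
  calc f r ≤ (N1+1) * (τ^k)^β * (X + N2*ρ0^β) := hbd
    _ ≤ (N1+1) * ((r/ρ0)^β / T) * (X + N2*ρ0^β) := by
        apply mul_le_mul_of_nonneg_right _ (by positivity)
        exact mul_le_mul_of_nonneg_left hτcmp (by positivity)
    _ = (N1+1)/T * (r/ρ0)^β * f ρ0 + (N1+1)/T * (2/T + 1) * N2 * r^β := by
        rw [hXdef, ← hrβ]
        simp only [div_eq_mul_inv]
        ring
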